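/- There exists N ∈ ℕ such that the following holds. Let γ satisfy the curve hypotheses with parameter N. Let p, q, r ∈ [1,∞], and suppose there is a constant C such that ‖Tf‖_{L^r_u L^q_x(ℝ²×[1,2])} ≤ C‖f‖_{L^p(ℝ²)} for all f ∈ L^p(ℝ²). Then (with the convention 1/∞ = 0): 1/q ≥ max{ 1/(2p) − 1/(2r), 2/p − (r+1)/r } and max{ 1/r − 1/q, 0 } ≥ s̃_{A,0}(p,q,q), where s̃_{A,0}(p,q,q) := 1/p − 3/q if q ≥ 3p′; s̃_{A,0}(p,q,q) := 3/(2p) − 3/(2q) − 1/2 if p′ < q < 3p′; and s̃_{A,0}(p,q,q) := 2/p − 1/q − 1 if q ≤ p′ (p′ the conjugate exponent of p). -/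

import Mathlib

open MeasureTheory Filter Set
open scoped ENNReal NNReal

noncomputable section

/-- The averaging operator along the dilated plane curve `(u t, u γ(t))`:
`Tf(x,u) = ∫_0^1 f(x₁ - u t, x₂ - u γ(t)) dt`. -/
def Tavg (γ : ℝ → ℝ) (f : ℝ × ℝ → ℝ) (x : ℝ × ℝ) (u : ℝ) : ℝ :=
  ∫ t in Set.Ioc (0 : ℝ) 1, f (x.1 - u * t, x.2 - u * γ t)

/-- The curve hypotheses with parameter `N`: `γ ∈ C^N((0,1])`, `γ(t) → 0` as `t → 0⁺`,
`γ` monotonic on `(0,1]`, with the lower bounds (i) for `j = 1,2` and the upper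
bounds (ii) for `j = 1,…,N` on `|tʲ γ⁽ʲ⁾(t) / γ(t)|`. -/
def CurveHyp (γ : ℝ → ℝ) (N : ℕ) : Prop :=
  ContDiffOn ℝ N γ (Set.Ioc 0 1) ∧
  Filter.Tendsto γ (nhdsWithin 0 (Set.Ioi 0)) (nhds 0) ∧
  (MonotoneOn γ (Set.Ioc 0 1) ∨ AntitoneOn γ (Set.Ioc 0 1)) ∧
  (∀ j : ℕ, 1 ≤ j → j ≤ 2 → ∃ C : ℝ, 0 < C ∧ ∀ t ∈ Set.Ioc (0 : ℝ) 1,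
    C ≤ |t ^ j * iteratedDerivWithin j γ (Set.Ioc 0 1) t / γ t|) ∧
  (∀ j : ℕ, 1 ≤ j → j ≤ N → ∃ C : ℝ, 0 < C ∧ ∀ t ∈ Set.Ioc (0 : ℝ) 1,
    |t ^ j * iteratedDerivWithin j γ (Set.Ioc 0 1) t / γ t| ≤ C)

/-- `ω := limsup_{t→0⁺} ln|γ(t)| / ln t`. -/
def curveOmega (γ : ℝ → ℝ) : ℝ :=
  Filter.limsup (fun t => Real.log |γ t| / Real.log t) (nhdsWithin 0 (Set.Ioi 0))

/-- The `L^q(μ)` norm (valued in `ℝ≥0∞`) of an `ℝ≥0∞`-valued function, with the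
essential supremum when `q = ∞`. -/
def eLpNormENN {α : Type*} [MeasurableSpace α] (g : α → ℝ≥0∞) (q : ℝ≥0∞)
    (μ : Measure α) : ℝ≥0∞ :=
  if q = ∞ then essSup g μ else (∫⁻ a, g a ^ q.toReal ∂μ) ^ (1 / q.toReal)


/-- The time-space mixed norm `‖F‖_{L^r_u L^q_x(ℝ² × [1,2])}`. -/
def mixedUX (r q : ℝ≥0∞) (F : ℝ × ℝ → ℝ → ℝ) : ℝ≥0∞ :=
  eLpNormENN (fun u => eLpNorm (fun x => F x u) q (volume : Measure (ℝ × ℝ))) r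
    ((volume : Measure ℝ).restrict (Set.Icc 1 2))

/-- `s̃_{A,0}(p,q,q)`, written in terms of `ip = 1/p` and `iq = 1/q`
(so that `q ≥ 3p'` reads `iq ≤ (1-ip)/3` and `q ≤ p'` reads `iq ≥ 1-ip`). -/
def sA0qq (ip iq : ℝ) : ℝ :=
  if iq ≤ (1 - ip) / 3 then ip - 3 * iq
  else if iq < 1 - ip then 3 / (2 : ℝ) * ip - 3 / (2 : ℝ) * iq - 1 / 2
  else 2 * ip - iq - 1

/-!
Each of the three inequalities `1/p ≤ 2/q + 1/r`, `2/p ≤ 1 + 1/q` and `3/p ≤ 1 + 3/q` is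
forced by a Knapp-type example: testing the estimate on the indicator of a set of size `δ`,
every norm involved is a constant times a power of `δ`, and letting `δ → 0⁺` compares the
exponents. The test sets are a `δ`-neighbourhood of a piece of the reflected curve
(`Tf ≳ 1` on a `δ`-square for `u ∈ [1, 1 + δ]`), a `δ`-square (`Tf ≳ δ` on a
`δ`-neighbourhood of each dilated curve), and a `δ × δ²` parallelogram along the tangent at
`t = 1/2` (`Tf ≳ δ` on a `δ × δ²` parallelogram). The two claimed inequalities are linear
consequences of these three.
-/

open Topology

theorem le_of_eventually_add_mul_log_le {a b c d : ℝ}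
    (h : ∀ᶠ δ in 𝓝[>] (0 : ℝ), a + b * Real.log δ ≤ c + d * Real.log δ) : d ≤ b := by
  by_contra! hlt
  have hlog : Tendsto (fun δ => (b - d) * Real.log δ) (𝓝[>] 0) atTop :=
    Real.tendsto_log_nhdsGT_zero.const_mul_atBot_of_neg (by linarith)
  obtain ⟨δ, hle, hgt⟩ := (h.and (hlog.eventually_gt_atTop (c - a))).exists
  linarith

theorem log_mul_pow_rpow {c δ : ℝ} (hc : 0 < c) (hδ : 0 < δ) (k : ℕ) (x : ℝ) :
    Real.log ((c * δ ^ k) ^ x) = x * Real.log c + (k * x) * Real.log δ := by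
  rw [Real.log_rpow (by positivity), Real.log_mul hc.ne' (by positivity), Real.log_pow]
  ring

theorem le_of_eventually_mul_pow_le {c₁ c₂ c₃ c₄ K x y z : ℝ} {k₁ k₂ k₃ k₄ : ℕ}
    (hc₁ : 0 < c₁) (hc₂ : 0 < c₂) (hc₃ : 0 < c₃) (hc₄ : 0 < c₄)
    (h : ∀ᶠ δ in 𝓝[>] (0 : ℝ),
      c₁ * δ ^ k₁ * (c₂ * δ ^ k₂) ^ x * (c₃ * δ ^ k₃) ^ y ≤ K * (c₄ * δ ^ k₄) ^ z) :
    k₄ * z ≤ k₁ + k₂ * x + k₃ * y := by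
  refine le_of_eventually_add_mul_log_le (a := Real.log c₁ + x * Real.log c₂ + y * Real.log c₃)
    (c := Real.log K + z * Real.log c₄) ?_
  filter_upwards [h, self_mem_nhdsWithin] with δ hδ (hδ₀ : 0 < δ)
  have hlhs : 0 < c₁ * δ ^ k₁ * (c₂ * δ ^ k₂) ^ x * (c₃ * δ ^ k₃) ^ y := by positivity
  have hrhs : 0 < (c₄ * δ ^ k₄) ^ z := by positivity
  have hK : 0 < K := pos_of_mul_pos_left (hlhs.trans_le hδ) hrhs.le
  have hlog := Real.log_le_log hlhs hδ
  rw [Real.log_mul (by positivity) (by positivity), Real.log_mul (by positivity) (by positivity),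
    Real.log_mul hc₁.ne' (by positivity), Real.log_mul hK.ne' hrhs.ne', Real.log_pow,
    log_mul_pow_rpow hc₂ hδ₀, log_mul_pow_rpow hc₃ hδ₀, log_mul_pow_rpow hc₄ hδ₀] at hlog
  linarith

theorem eLpNormENN_eq_eLpNorm {α : Type*} [MeasurableSpace α] {μ : Measure α} (g : α → ℝ≥0∞)
    {q : ℝ≥0∞} (hq : q ≠ 0) : eLpNormENN g q μ = eLpNorm g q μ := by
  by_cases hqt : q = ∞
  · simp [eLpNormENN, hqt, eLpNormEssSup]
  · simp [eLpNormENN, eLpNorm, hq, hqt, eLpNorm']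

theorem mul_measure_rpow_le_eLpNorm {α ε : Type*} [MeasurableSpace α] {μ : Measure α} [ENorm ε]
    {f : α → ε} {p : ℝ≥0∞} (hp : p ≠ 0) {s : Set α} (hs : MeasurableSet s) (hμs : μ s ≠ 0)
    {a : ℝ≥0∞} (hf : ∀ x ∈ s, a ≤ ‖f x‖ₑ) : a * μ s ^ (p⁻¹).toReal ≤ eLpNorm f p μ := by
  calc a * μ s ^ (p⁻¹).toReal = eLpNorm (s.indicator fun _ => a) p μ := by
        rw [eLpNorm_indicator_const' hs hμs hp, enorm_eq_self, ENNReal.toReal_inv, one_div]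
    _ ≤ eLpNorm f p μ := by
        refine eLpNorm_mono_enorm fun x => ?_
        by_cases hx : x ∈ s
        · simpa [hx] using hf x hx
        · simp [hx]

theorem ContinuousOn.exists_continuous_eqOn_Icc {α β : Type*} [LinearOrder α]
    [TopologicalSpace α] [OrderTopology α] [TopologicalSpace β] {f : α → β} {a b : α}
    (hab : a ≤ b) (hf : ContinuousOn f (Icc a b)) :
    ∃ g : α → β, Continuous g ∧ EqOn g f (Icc a b) :=
  ⟨fun x => f (projIcc a b hab x),
    hf.comp_continuous (continuous_subtype_val.comp continuous_projIcc)
      fun x => (projIcc a b hab x).2,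
    fun x hx => by simp [projIcc_of_mem hab hx]⟩

theorem volume_regionBetween_sub_add_const {F : ℝ → ℝ} {a b c : ℝ}
    (hF : IntegrableOn F (Icc a b)) (hc : 0 ≤ c) (hab : a ≤ b) :
    volume (regionBetween (fun y => F y - c) (fun y => F y + c) (Icc a b))
      = ENNReal.ofReal (2 * c * (b - a)) := by
  have hconst : IntegrableOn (fun _ => c) (Icc a b) := integrableOn_const measure_Icc_lt_top.ne
  rw [Measure.volume_eq_prod, volume_regionBetween_eq_integral (f := fun y => F y - c)
    (g := fun y => F y + c) (hF.sub hconst) (hF.add hconst) measurableSet_Icc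
    fun y _ => by linarith]
  simp only [Pi.sub_apply, add_sub_sub_cancel, setIntegral_const, Real.volume_real_Icc_of_le hab,
    smul_eq_mul]
  ring_nf

theorem abs_sub_sub_deriv_mul_le {f f' : ℝ → ℝ} {s : Set ℝ} {L : ℝ≥0} (hs : Convex ℝ s)
    (hf : ∀ x ∈ s, HasDerivWithinAt f (f' x) s x) (hf' : LipschitzOnWith L f' s) {a x : ℝ}
    (ha : a ∈ s) (hx : x ∈ s) : |f x - f a - f' a * (x - a)| ≤ L * (x - a) ^ 2 := by
  have hseg : uIcc a x ⊆ s := hs.ordConnected.uIcc_subset ha hx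
  have hbound : ∀ y ∈ uIcc a x, ‖f' y - f' a‖ ≤ L * |x - a| := fun y hy =>
    calc ‖f' y - f' a‖ ≤ L * |y - a| := by
          simpa [Real.dist_eq] using hf'.dist_le_mul y (hseg hy) a ha
      _ ≤ L * |x - a| := mul_le_mul_of_nonneg_left (abs_sub_left_of_mem_uIcc hy) L.2
  have hderiv : ∀ y ∈ uIcc a x,
      HasDerivWithinAt (fun y => f y - f' a * y) (f' y - f' a) (uIcc a x) y := fun y hy => by
    simpa using ((hf y (hseg hy)).mono hseg).fun_sub ((hasDerivWithinAt_id y _).const_mul (f' a))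
  have := (convex_uIcc a x).norm_image_sub_le_of_norm_hasDerivWithin_le hderiv hbound
    left_mem_uIcc right_mem_uIcc
  rw [Real.norm_eq_abs, Real.norm_eq_abs] at this
  calc |f x - f a - f' a * (x - a)| = |f x - f' a * x - (f a - f' a * a)| := by ring_nf
    _ ≤ L * |x - a| * |x - a| := this
    _ = L * (x - a) ^ 2 := by rw [mul_assoc, ← abs_mul, ← sq, abs_sq]

structure CurveBoundsNearHalf (γ : ℝ → ℝ) (M : ℝ) : Prop where
  bound : ∀ t ∈ Icc (3/8 : ℝ) (5/8), |γ t| ≤ M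
  lipschitz : ∀ s ∈ Icc (3/8 : ℝ) (5/8), ∀ t ∈ Icc (3/8 : ℝ) (5/8), |γ s - γ t| ≤ M * |s - t|
  taylor : ∀ t ∈ Icc (3/8 : ℝ) (5/8),
    |γ t - γ (1/2) - deriv γ (1/2) * (t - 1/2)| ≤ M * (t - 1/2) ^ 2

theorem CurveBoundsNearHalf.nonneg {γ : ℝ → ℝ} {M : ℝ} (h : CurveBoundsNearHalf γ M) : 0 ≤ M :=
  (abs_nonneg _).trans (h.bound (1/2) (by norm_num))

theorem ContDiffOn.exists_curveBoundsNearHalf {γ : ℝ → ℝ} (hγ : ContDiffOn ℝ 2 γ (Ioc 0 1)) :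
    ∃ M, CurveBoundsNearHalf γ M := by
  have hK : Icc (3/8 : ℝ) (5/8) ⊆ Ioo 0 1 := Icc_subset_Ioo (by norm_num) (by norm_num)
  have hγ' : ContDiffOn ℝ 2 γ (Ioo 0 1) := hγ.mono Ioo_subset_Ioc_self
  have hd : ContDiffOn ℝ 1 (deriv γ) (Ioo 0 1) := hγ'.deriv_of_isOpen isOpen_Ioo (by norm_num)
  obtain ⟨M₀, hM₀⟩ := isCompact_Icc.exists_bound_of_continuousOn (hγ'.continuousOn.mono hK)
  obtain ⟨L₁, hL₁⟩ :=
    (hγ'.mono hK).exists_lipschitzOnWith two_ne_zero (convex_Icc _ _) isCompact_Icc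
  obtain ⟨L₂, hL₂⟩ :=
    (hd.mono hK).exists_lipschitzOnWith one_ne_zero (convex_Icc _ _) isCompact_Icc
  have hderiv : ∀ t ∈ Icc (3/8 : ℝ) (5/8), HasDerivWithinAt γ (deriv γ t) (Icc (3/8) (5/8)) t :=
    fun t ht => ((hγ'.differentiableOn two_ne_zero t (hK ht)).differentiableAt
      (isOpen_Ioo.mem_nhds (hK ht))).hasDerivAt.hasDerivWithinAt
  refine ⟨max M₀ (max L₁ L₂), fun t ht => ?_, fun s hs t ht => ?_, fun t ht => ?_⟩
  · exact (hM₀ t ht).trans (le_max_left _ _)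
  · calc |γ s - γ t| ≤ L₁ * |s - t| := by simpa [Real.dist_eq] using hL₁.dist_le_mul s hs t ht
      _ ≤ _ := by gcongr; exact (le_max_left _ _).trans (le_max_right _ _)
  · calc _ ≤ L₂ * (t - 1/2) ^ 2 :=
          abs_sub_sub_deriv_mul_le (convex_Icc _ _) hderiv hL₂ (by norm_num) ht
      _ ≤ _ := by gcongr; exact (le_max_right _ _).trans (le_max_right _ _)

theorem sub_le_Tavg_indicator {γ : ℝ → ℝ} (hγ : ContinuousOn γ (Ioc 0 1)) {S : Set (ℝ × ℝ)}
    (hS : MeasurableSet S) {x : ℝ × ℝ} {u t₁ t₂ : ℝ} (ht : t₁ ≤ t₂) (hsub : Icc t₁ t₂ ⊆ Ioc 0 1)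
    (hmem : ∀ t ∈ Icc t₁ t₂, (x.1 - u * t, x.2 - u * γ t) ∈ S) :
    t₂ - t₁ ≤ Tavg γ (S.indicator fun _ => 1) x u := by
  set φ : ℝ → ℝ × ℝ := fun t => (x.1 - u * t, x.2 - u * γ t)
  have hφ : AEMeasurable φ (volume.restrict (Ioc 0 1)) :=
    ((continuousOn_const.sub (continuousOn_const.mul continuousOn_id)).prodMk
      (continuousOn_const.sub (continuousOn_const.mul hγ))).aemeasurable measurableSet_Ioc
  have hint : IntegrableOn (fun t => S.indicator (fun _ => (1 : ℝ)) (φ t)) (Ioc 0 1) :=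
    (integrableOn_const measure_Ioc_lt_top.ne (C := (1 : ℝ))).mono'
      ((measurable_one.indicator hS).comp_aemeasurable hφ).aestronglyMeasurable
      (Eventually.of_forall fun t => by by_cases h : φ t ∈ S <;> simp [h])
  calc t₂ - t₁ = ∫ t in Icc t₁ t₂, S.indicator (fun _ => (1 : ℝ)) (φ t) := by
        rw [setIntegral_congr_fun measurableSet_Icc fun t ht => indicator_of_mem (hmem t ht) _,
          setIntegral_const, Real.volume_real_Icc_of_le ht, smul_eq_mul, mul_one]
    _ ≤ Tavg γ (S.indicator fun _ => 1) x u :=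
        setIntegral_mono_set hint
          (Eventually.of_forall fun _ => indicator_nonneg (fun _ _ => zero_le_one) _)
          hsub.eventuallyLE

def TimeSpaceEstimate (γ : ℝ → ℝ) (p q r : ℝ≥0∞) (C : ℝ) : Prop :=
  ∀ f : ℝ × ℝ → ℝ, MemLp f p volume →
    mixedUX r q (Tavg γ f) ≤ ENNReal.ofReal C * eLpNorm f p volume

theorem TimeSpaceEstimate.mul_rpow_le {γ : ℝ → ℝ} {p q r : ℝ≥0∞} {C : ℝ}
    (hT : TimeSpaceEstimate γ p q r C) (hq : q ≠ 0) (hr : r ≠ 0)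
    {S : Set (ℝ × ℝ)} (hS : MeasurableSet S) {mS : ℝ} (hmS : 0 ≤ mS)
    (hvolS : volume S = ENNReal.ofReal mS)
    {J : Set ℝ} (hJ : MeasurableSet J) (hJ₂ : J ⊆ Icc 1 2) {mJ : ℝ} (hmJ : 0 < mJ)
    (hvolJ : volume J = ENNReal.ofReal mJ)
    {E : ℝ → Set (ℝ × ℝ)} (hE : ∀ u ∈ J, MeasurableSet (E u)) {mE : ℝ} (hmE : 0 < mE)
    (hvolE : ∀ u ∈ J, volume (E u) = ENNReal.ofReal mE)
    {a : ℝ} (ha : 0 < a) (hTa : ∀ u ∈ J, ∀ x ∈ E u, a ≤ Tavg γ (S.indicator fun _ => 1) x u) :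
    a * mE ^ (q⁻¹).toReal * mJ ^ (r⁻¹).toReal ≤ C * mS ^ (p⁻¹).toReal := by
  set f : ℝ × ℝ → ℝ := S.indicator fun _ => 1
  have hf : MemLp f p volume := memLp_indicator_const p hS 1 (Or.inr (by simp [hvolS]))
  have hinner : ∀ u ∈ J, ENNReal.ofReal a * ENNReal.ofReal mE ^ (q⁻¹).toReal
      ≤ eLpNorm (fun x => Tavg γ f x u) q volume := fun u hu => by
    rw [← hvolE u hu]
    refine mul_measure_rpow_le_eLpNorm hq (hE u hu) (by simp [hvolE u hu, hmE]) fun x hx => ?_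
    rw [Real.enorm_eq_ofReal_abs]
    exact ENNReal.ofReal_le_ofReal ((hTa u hu x hx).trans (le_abs_self _))
  have hμJ : volume.restrict (Icc (1 : ℝ) 2) J = ENNReal.ofReal mJ := by
    rw [Measure.restrict_apply hJ, inter_eq_left.2 hJ₂, hvolJ]
  have hmixed : ENNReal.ofReal a * ENNReal.ofReal mE ^ (q⁻¹).toReal
      * ENNReal.ofReal mJ ^ (r⁻¹).toReal ≤ mixedUX r q (Tavg γ f) := by
    rw [mixedUX, eLpNormENN_eq_eLpNorm _ hr, ← hμJ]
    exact mul_measure_rpow_le_eLpNorm hr hJ (by simp [hμJ, hmJ]) hinner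
  have hnorm : eLpNorm f p volume ≤ ENNReal.ofReal mS ^ (p⁻¹).toReal := by
    simpa [hvolS] using eLpNorm_indicator_const_le (μ := volume) (s := S) (1 : ℝ) p
  have hprod : _ ≤ ENNReal.ofReal C * ENNReal.ofReal mS ^ (p⁻¹).toReal :=
    (hmixed.trans (hT f hf)).trans (by gcongr)
  rw [ENNReal.ofReal_rpow_of_pos hmE, ENNReal.ofReal_rpow_of_pos hmJ,
    ENNReal.ofReal_rpow_of_nonneg hmS ENNReal.toReal_nonneg, ← ENNReal.ofReal_mul ha.le,
    ← ENNReal.ofReal_mul (by positivity), ← ENNReal.ofReal_mul' (by positivity),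
    ENNReal.ofReal_le_ofReal_iff'] at hprod
  exact hprod.resolve_right (not_le.2 (by positivity))

theorem CurveBoundsNearHalf.le_Tavg_indicator_reflected_band {γ g : ℝ → ℝ} {M : ℝ}
    (hM : CurveBoundsNearHalf γ M) (hγ : ContinuousOn γ (Ioc 0 1)) (hg : Continuous g)
    (hgγ : EqOn g γ (Icc (3/8) (5/8))) {δ u : ℝ} (hδ₀ : 0 < δ) (hδ : δ < 1/64)
    (hu : u ∈ Icc 1 (1 + δ)) {x : ℝ × ℝ} (hx : x ∈ Ioo (-δ) δ ×ˢ Ioo (-δ) δ) :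
    1/8 * δ ^ 0 ≤ Tavg γ ((regionBetween (fun y => -g (-y) - (1 + 3 * M) * δ)
      (fun y => -g (-y) + (1 + 3 * M) * δ) (Icc (-(5/8)) (-(3/8)))).indicator fun _ => 1) x u := by
  obtain ⟨hu₁, hu₂⟩ := hu
  obtain ⟨⟨hx₁, hx₁'⟩, hx₂, hx₂'⟩ := hx
  have hM₀ := hM.nonneg
  have hmem : ∀ t ∈ Icc (7/16 : ℝ) (9/16), (x.1 - u * t, x.2 - u * γ t) ∈
      regionBetween (fun y => -g (-y) - (1 + 3 * M) * δ) (fun y => -g (-y) + (1 + 3 * M) * δ)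
        (Icc (-(5/8)) (-(3/8))) := by
    rintro t ⟨ht₁, ht₂⟩
    have hshift : |(u * t - x.1) - t| ≤ 2 * δ := abs_le.2 ⟨by nlinarith, by nlinarith⟩
    have hut : u * t - x.1 ∈ Icc (3/8 : ℝ) (5/8) := ⟨by nlinarith, by nlinarith⟩
    have hγγ : |γ (u * t - x.1) - γ t| ≤ 2 * M * δ := calc
      _ ≤ M * |(u * t - x.1) - t| := hM.lipschitz _ hut t ⟨by linarith, by linarith⟩
      _ ≤ M * (2 * δ) := mul_le_mul_of_nonneg_left hshift hM₀
      _ = 2 * M * δ := by ring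
    have hdil : |(1 - u) * γ t| ≤ M * δ := by
      rw [abs_mul, mul_comm M]
      exact mul_le_mul (abs_le.2 ⟨by linarith, by linarith⟩)
        (hM.bound t ⟨by linarith, by linarith⟩) (abs_nonneg _) hδ₀.le
    have hsplit : x.2 - u * γ t + γ (u * t - x.1)
        = x.2 + (γ (u * t - x.1) - γ t) + (1 - u) * γ t := by ring
    obtain ⟨hγγ₁, hγγ₂⟩ := abs_le.1 hγγ
    obtain ⟨hdil₁, hdil₂⟩ := abs_le.1 hdil
    refine ⟨⟨by linarith [hut.2], by linarith [hut.1]⟩, ?_, ?_⟩ <;>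
      dsimp only <;> rw [neg_sub, hgγ hut] <;> linarith
  calc 1/8 * δ ^ 0 = 9/16 - 7/16 := by norm_num
    _ ≤ _ := sub_le_Tavg_indicator hγ (measurableSet_regionBetween (by fun_prop) (by fun_prop)
          measurableSet_Icc) (by norm_num)
        (fun t ht => ⟨by linarith [ht.1], by linarith [ht.2]⟩) hmem

theorem TimeSpaceEstimate.inv_le_two_inv_add_inv {γ : ℝ → ℝ} {p q r : ℝ≥0∞} {C M : ℝ}
    (hT : TimeSpaceEstimate γ p q r C) (hq : q ≠ 0) (hr : r ≠ 0)
    (hγ : ContinuousOn γ (Ioc 0 1)) (hM : CurveBoundsNearHalf γ M) :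
    (p⁻¹).toReal ≤ 2 * (q⁻¹).toReal + (r⁻¹).toReal := by
  have hγK : ContinuousOn γ (Icc (3/8) (5/8)) :=
    hγ.mono (Icc_subset_Ioc (by norm_num) (by norm_num))
  obtain ⟨g, hg, hgγ⟩ := hγK.exists_continuous_eqOn_Icc (by norm_num)
  have hM₀ := hM.nonneg
  have key : ∀ᶠ δ in 𝓝[>] (0 : ℝ), 1/8 * δ ^ 0 * (4 * δ ^ 2) ^ (q⁻¹).toReal
      * (1 * δ ^ 1) ^ (r⁻¹).toReal ≤ C * ((1 + 3 * M) / 2 * δ ^ 1) ^ (p⁻¹).toReal := by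
    filter_upwards [Ioo_mem_nhdsGT (by norm_num : (0 : ℝ) < 1/64)] with δ ⟨hδ₀, hδ⟩
    have hF : Continuous fun y => -g (-y) := by fun_prop
    refine hT.mul_rpow_le hq hr
      (S := regionBetween (fun y => -g (-y) - (1 + 3 * M) * δ)
        (fun y => -g (-y) + (1 + 3 * M) * δ) (Icc (-(5/8)) (-(3/8))))
      (J := Icc 1 (1 + δ)) (E := fun _ => Ioo (-δ) δ ×ˢ Ioo (-δ) δ)
      (mS := (1 + 3 * M) / 2 * δ ^ 1) (mJ := 1 * δ ^ 1) (mE := 4 * δ ^ 2) (a := 1/8 * δ ^ 0)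
      (measurableSet_regionBetween (by fun_prop) (by fun_prop) measurableSet_Icc)
      (by positivity) ?_ measurableSet_Icc (Icc_subset_Icc le_rfl (by linarith)) (by positivity)
      (by rw [Real.volume_Icc]; ring_nf)
      (fun _ _ => measurableSet_Ioo.prod measurableSet_Ioo) (by positivity) ?_ (by positivity)
      (fun u hu x hx => hM.le_Tavg_indicator_reflected_band hγ hg hgγ hδ₀ hδ hu hx)
    · rw [volume_regionBetween_sub_add_const hF.integrableOn_Icc (by positivity) (by norm_num)]
      ring_nf
    · intro u _
      rw [Measure.volume_eq_prod, Measure.prod_prod, Real.volume_Ioo,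
        ← ENNReal.ofReal_mul (by linarith)]
      ring_nf
  have := le_of_eventually_mul_pow_le (by norm_num) (by norm_num) one_pos (by linarith) key
  push_cast at this
  linarith

theorem CurveBoundsNearHalf.le_Tavg_indicator_box {γ : ℝ → ℝ} {M : ℝ}
    (hM : CurveBoundsNearHalf γ M) (hγ : ContinuousOn γ (Ioc 0 1)) {δ u s : ℝ} (hδ₀ : 0 < δ)
    (hδ : δ < 1/64) (hu : u ∈ Icc (1 : ℝ) 2) (hs : s ∈ Icc (7/16 : ℝ) (1/2)) {x : ℝ × ℝ}
    (hx₁ : x.1 = u * s) (hx₂ : |x.2 - u * γ s| < δ) :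
    1/2 * δ ^ 1 ≤ Tavg γ
      ((Icc 0 δ ×ˢ Icc (-((1 + 2 * M) * δ)) ((1 + 2 * M) * δ)).indicator fun _ => 1) x u := by
  obtain ⟨hu₁, hu₂⟩ := hu
  obtain ⟨hs₁, hs₂⟩ := hs
  have hM₀ := hM.nonneg
  set w := δ / u
  have hw : u * w = δ := mul_div_cancel₀ δ (by positivity)
  have hw₀ : 0 < w := by positivity
  have hwδ : w ≤ δ := div_le_self hδ₀.le hu₁
  have hmem : ∀ t ∈ Icc (s - w) s, (x.1 - u * t, x.2 - u * γ t) ∈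
      Icc 0 δ ×ˢ Icc (-((1 + 2 * M) * δ)) ((1 + 2 * M) * δ) := by
    rintro t ⟨ht₁, ht₂⟩
    have hγst : |γ s - γ t| ≤ M * δ := calc
      |γ s - γ t| ≤ M * |s - t| :=
        hM.lipschitz s ⟨by linarith, by linarith⟩ t ⟨by linarith, by linarith⟩
      _ ≤ M * δ := by gcongr; rw [abs_le]; constructor <;> linarith
    have hcurve : |x.2 - u * γ t| ≤ (1 + 2 * M) * δ := calc
      |x.2 - u * γ t| = |(x.2 - u * γ s) + u * (γ s - γ t)| := by ring_nf
      _ ≤ |x.2 - u * γ s| + |u * (γ s - γ t)| := abs_add_le _ _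
      _ = |x.2 - u * γ s| + u * |γ s - γ t| := by rw [abs_mul, abs_of_pos (by linarith : 0 < u)]
      _ ≤ δ + 2 * (M * δ) := by gcongr
      _ = (1 + 2 * M) * δ := by ring
    refine ⟨⟨?_, ?_⟩, abs_le.1 hcurve⟩ <;> rw [hx₁] <;> nlinarith
  calc 1/2 * δ ^ 1 ≤ s - (s - w) := by
        rw [pow_one, sub_sub_cancel, ← hw]; nlinarith
    _ ≤ _ := sub_le_Tavg_indicator hγ (measurableSet_Icc.prod measurableSet_Icc) (by linarith)
        (fun t ht => ⟨by linarith [ht.1], by linarith [ht.2]⟩) hmem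

theorem TimeSpaceEstimate.two_inv_le_one_add_inv {γ : ℝ → ℝ} {p q r : ℝ≥0∞} {C M : ℝ}
    (hT : TimeSpaceEstimate γ p q r C) (hq : q ≠ 0) (hr : r ≠ 0)
    (hγ : ContinuousOn γ (Ioc 0 1)) (hM : CurveBoundsNearHalf γ M) :
    2 * (p⁻¹).toReal ≤ 1 + (q⁻¹).toReal := by
  have hγK : ContinuousOn γ (Icc (3/8) (5/8)) :=
    hγ.mono (Icc_subset_Ioc (by norm_num) (by norm_num))
  obtain ⟨g, hg, hgγ⟩ := hγK.exists_continuous_eqOn_Icc (by norm_num)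
  have hM₀ := hM.nonneg
  have key : ∀ᶠ δ in 𝓝[>] (0 : ℝ), 1/2 * δ ^ 1 * (1/8 * δ ^ 1) ^ (q⁻¹).toReal
      * (1 * δ ^ 0) ^ (r⁻¹).toReal ≤ C * ((2 + 4 * M) * δ ^ 2) ^ (p⁻¹).toReal := by
    filter_upwards [Ioo_mem_nhdsGT (by norm_num : (0 : ℝ) < 1/64)] with δ ⟨hδ₀, hδ⟩
    have hF : ∀ u : ℝ, Continuous fun y => u * g (y / u) := fun u => by fun_prop
    refine hT.mul_rpow_le hq hr (S := Icc 0 δ ×ˢ Icc (-((1 + 2 * M) * δ)) ((1 + 2 * M) * δ))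
      (J := Icc 1 2)
      (E := fun u => regionBetween (fun y => u * g (y / u) - δ) (fun y => u * g (y / u) + δ)
        (Icc (u * (7/16)) (u * (7/16) + 1/16)))
      (mS := (2 + 4 * M) * δ ^ 2) (mJ := 1 * δ ^ 0) (mE := 1/8 * δ ^ 1) (a := 1/2 * δ ^ 1)
      (measurableSet_Icc.prod measurableSet_Icc) (by positivity) ?_
      measurableSet_Icc subset_rfl (by norm_num) (by norm_num)
      (fun u _ => measurableSet_regionBetween ((hF u).sub continuous_const).measurable
        ((hF u).add continuous_const).measurable measurableSet_Icc) (by positivity)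
      (fun u _ => by
        rw [volume_regionBetween_sub_add_const (hF u).integrableOn_Icc hδ₀.le (by linarith)]
        ring_nf)
      (by positivity) ?_
    · rw [Measure.volume_eq_prod, Measure.prod_prod, Real.volume_Icc, Real.volume_Icc,
        ← ENNReal.ofReal_mul (by linarith)]
      ring_nf
    · rintro u hu x ⟨⟨hx₁, hx₁'⟩, hx₂, hx₂'⟩
      have hu₀ : 0 < u := by linarith [hu.1]
      have hs : x.1 / u ∈ Icc (7/16 : ℝ) (1/2) :=
        ⟨(le_div_iff₀ hu₀).2 (by linarith), (div_le_iff₀ hu₀).2 (by nlinarith [hu.1])⟩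
      dsimp only at hx₂ hx₂'
      rw [hgγ ⟨by linarith [hs.1], by linarith [hs.2]⟩] at hx₂ hx₂'
      exact hM.le_Tavg_indicator_box hγ hδ₀ hδ hu hs (mul_div_cancel₀ _ hu₀.ne').symm
        (abs_lt.2 ⟨by linarith, by linarith⟩)
  have := le_of_eventually_mul_pow_le (by norm_num) (by norm_num) one_pos (by linarith) key
  push_cast at this
  linarith

theorem CurveBoundsNearHalf.le_Tavg_indicator_parallelogram {γ : ℝ → ℝ} {M : ℝ}
    (hM : CurveBoundsNearHalf γ M) (hγ : ContinuousOn γ (Ioc 0 1)) {δ u s : ℝ} (hδ₀ : 0 < δ)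
    (hδ : δ < 1/64) (hu : u ∈ Icc (1 : ℝ) 2) (hs : s ∈ Icc (1/2 : ℝ) (1/2 + δ)) {x : ℝ × ℝ}
    (hx₁ : x.1 = u * s) (hx₂ : |x.2 - u * γ (1/2) - deriv γ (1/2) * (u * (s - 1/2))| < δ ^ 2) :
    1/2 * δ ^ 1 ≤ Tavg γ ((regionBetween (fun y => deriv γ (1/2) * y - (1 + 2 * M) * δ ^ 2)
      (fun y => deriv γ (1/2) * y + (1 + 2 * M) * δ ^ 2) (Icc 0 δ)).indicator fun _ => 1) x u := by
  obtain ⟨hu₁, hu₂⟩ := hu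
  obtain ⟨hs₁, hs₂⟩ := hs
  have hM₀ := hM.nonneg
  set d := deriv γ (1/2)
  set w := δ / u
  have hw : u * w = δ := mul_div_cancel₀ δ (by positivity)
  have hw₀ : 0 < w := by positivity
  have hwδ : w ≤ δ := div_le_self hδ₀.le hu₁
  have hmem : ∀ t ∈ Icc (s - w) s, (x.1 - u * t, x.2 - u * γ t) ∈
      regionBetween (fun y => d * y - (1 + 2 * M) * δ ^ 2) (fun y => d * y + (1 + 2 * M) * δ ^ 2)
        (Icc 0 δ) := by
    rintro t ⟨ht₁, ht₂⟩
    have htaylor : |γ t - γ (1/2) - d * (t - 1/2)| ≤ M * δ ^ 2 := calc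
      _ ≤ M * (t - 1/2) ^ 2 := hM.taylor t ⟨by linarith, by linarith⟩
      _ ≤ M * δ ^ 2 := mul_le_mul_of_nonneg_left (sq_le_sq' (by linarith) (by linarith)) hM₀
    have hcurve : |x.2 - u * γ t - d * (x.1 - u * t)| < (1 + 2 * M) * δ ^ 2 := calc
      _ = |(x.2 - u * γ (1/2) - d * (u * (s - 1/2))) - u * (γ t - γ (1/2) - d * (t - 1/2))| := by
          rw [hx₁]; ring_nf
      _ ≤ |x.2 - u * γ (1/2) - d * (u * (s - 1/2))| + |u * (γ t - γ (1/2) - d * (t - 1/2))| :=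
          abs_sub _ _
      _ = |x.2 - u * γ (1/2) - d * (u * (s - 1/2))| + u * |γ t - γ (1/2) - d * (t - 1/2)| := by
          rw [abs_mul, abs_of_pos (by linarith : 0 < u)]
      _ < δ ^ 2 + 2 * (M * δ ^ 2) :=
          add_lt_add_of_lt_of_le hx₂ (mul_le_mul hu₂ htaylor (abs_nonneg _) zero_le_two)
      _ = (1 + 2 * M) * δ ^ 2 := by ring
    obtain ⟨hlo, hhi⟩ := abs_lt.1 hcurve
    exact ⟨⟨by rw [hx₁]; nlinarith, by rw [hx₁]; nlinarith⟩, by dsimp only; linarith,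
      by dsimp only; linarith⟩
  calc 1/2 * δ ^ 1 ≤ s - (s - w) := by
        rw [pow_one, sub_sub_cancel, ← hw]; nlinarith
    _ ≤ _ := sub_le_Tavg_indicator hγ (measurableSet_regionBetween (by fun_prop) (by fun_prop)
          measurableSet_Icc) (by linarith)
        (fun t ht => ⟨by linarith [ht.1], by linarith [ht.2]⟩) hmem

theorem TimeSpaceEstimate.three_inv_le_one_add_three_inv {γ : ℝ → ℝ} {p q r : ℝ≥0∞} {C M : ℝ}
    (hT : TimeSpaceEstimate γ p q r C) (hq : q ≠ 0) (hr : r ≠ 0)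
    (hγ : ContinuousOn γ (Ioc 0 1)) (hM : CurveBoundsNearHalf γ M) :
    3 * (p⁻¹).toReal ≤ 1 + 3 * (q⁻¹).toReal := by
  have hM₀ := hM.nonneg
  set d := deriv γ (1/2)
  have key : ∀ᶠ δ in 𝓝[>] (0 : ℝ), 1/2 * δ ^ 1 * (2 * δ ^ 3) ^ (q⁻¹).toReal
      * (1 * δ ^ 0) ^ (r⁻¹).toReal ≤ C * ((2 + 4 * M) * δ ^ 3) ^ (p⁻¹).toReal := by
    filter_upwards [Ioo_mem_nhdsGT (by norm_num : (0 : ℝ) < 1/64)] with δ ⟨hδ₀, hδ⟩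
    have hF : ∀ u : ℝ, Continuous fun z => u * γ (1/2) + d * (z - u * (1/2)) := fun u => by
      fun_prop
    refine hT.mul_rpow_le hq hr
      (S := regionBetween (fun y => d * y - (1 + 2 * M) * δ ^ 2)
        (fun y => d * y + (1 + 2 * M) * δ ^ 2) (Icc 0 δ))
      (J := Icc 1 2)
      (E := fun u => regionBetween (fun z => u * γ (1/2) + d * (z - u * (1/2)) - δ ^ 2)
        (fun z => u * γ (1/2) + d * (z - u * (1/2)) + δ ^ 2) (Icc (u * (1/2)) (u * (1/2) + δ)))
      (mS := (2 + 4 * M) * δ ^ 3) (mJ := 1 * δ ^ 0) (mE := 2 * δ ^ 3) (a := 1/2 * δ ^ 1)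
      (measurableSet_regionBetween (by fun_prop) (by fun_prop) measurableSet_Icc)
      (by positivity) ?_ measurableSet_Icc subset_rfl (by norm_num) (by norm_num)
      (fun u _ => measurableSet_regionBetween ((hF u).sub continuous_const).measurable
        ((hF u).add continuous_const).measurable measurableSet_Icc) (by positivity)
      (fun u _ => by
        rw [volume_regionBetween_sub_add_const (hF u).integrableOn_Icc (by positivity)
          (by linarith)]
        ring_nf)
      (by positivity) ?_
    · rw [volume_regionBetween_sub_add_const (continuous_const_mul d).integrableOn_Icc
        (by positivity) hδ₀.le]
      ring_nf
    · rintro u hu x ⟨⟨hx₁, hx₁'⟩, hx₂, hx₂'⟩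
      have hu₀ : 0 < u := by linarith [hu.1]
      have hx : x.1 = u * (x.1 / u) := (mul_div_cancel₀ _ hu₀.ne').symm
      have hs : x.1 / u ∈ Icc (1/2 : ℝ) (1/2 + δ) :=
        ⟨(le_div_iff₀ hu₀).2 (by linarith), (div_le_iff₀ hu₀).2 (by nlinarith [hu.1])⟩
      refine hM.le_Tavg_indicator_parallelogram hγ hδ₀ hδ hu hs hx (abs_lt.2 ⟨?_, ?_⟩) <;>
        dsimp only at hx₂ hx₂' <;> rw [mul_sub, ← hx] <;> linarith
  have := le_of_eventually_mul_pow_le (by norm_num) two_pos one_pos (by linarith) key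
  push_cast at this
  linarith

theorem sA0qq_le {ip iq ir : ℝ} (hA : ip ≤ 2 * iq + ir) (hB : 2 * ip ≤ 1 + iq)
    (hK : 3 * ip ≤ 1 + 3 * iq) : sA0qq ip iq ≤ max (ir - iq) 0 := by
  have := le_max_left (ir - iq) 0
  have := le_max_right (ir - iq) 0
  unfold sA0qq
  split_ifs <;> linarith

/-- Theorem 1.5, necessary condition (IV): if the time-space estimate
`L^p_x → L^r_u L^q_x` holds for `T`, then
`1/q ≥ max{1/(2p) - 1/(2r), 2/p - (r+1)/r}` and
`max{1/r - 1/q, 0} ≥ s̃_{A,0}(p,q,q)`. -/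
theorem timeSpace_necessity_IV :
    ∃ N : ℕ, ∀ γ : ℝ → ℝ, CurveHyp γ N →
      ∀ p q r : ℝ≥0∞, 1 ≤ p → 1 ≤ q → 1 ≤ r →
      (∃ C : ℝ, ∀ f : ℝ × ℝ → ℝ, MemLp f p volume →
        mixedUX r q (Tavg γ f) ≤ ENNReal.ofReal C * eLpNorm f p volume) →
      max ((p⁻¹).toReal / 2 - (r⁻¹).toReal / 2)
          (2 * (p⁻¹).toReal - (1 + (r⁻¹).toReal)) ≤ (q⁻¹).toReal ∧
      sA0qq (p⁻¹).toReal (q⁻¹).toReal ≤ max ((r⁻¹).toReal - (q⁻¹).toReal) 0 := by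
  refine ⟨2, ?_⟩
  rintro γ hγ p q r - hq hr ⟨C, hT : TimeSpaceEstimate γ p q r C⟩
  have hγ₂ : ContDiffOn ℝ 2 γ (Ioc 0 1) := by exact_mod_cast hγ.1
  obtain ⟨M, hM⟩ := hγ₂.exists_curveBoundsNearHalf
  have hq₀ : q ≠ 0 := (zero_lt_one.trans_le hq).ne'
  have hr₀ : r ≠ 0 := (zero_lt_one.trans_le hr).ne'
  have hA := hT.inv_le_two_inv_add_inv hq₀ hr₀ hγ₂.continuousOn hM
  have hB := hT.two_inv_le_one_add_inv hq₀ hr₀ hγ₂.continuousOn hM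
  have hK := hT.three_inv_le_one_add_three_inv hq₀ hr₀ hγ₂.continuousOn hM
  have hr' : 0 ≤ (r⁻¹).toReal := ENNReal.toReal_nonneg
  exact ⟨max_le (by linarith) (by linarith), sA0qq_le hA hB hK⟩

end
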